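/- Let σ : U × U → W be a symmetric bilinear map, V = ℂ ⊕ U ⊕ W, and define the symmetric bilinear map A : V × V → V by A((t₁,u₁,w₁),(t₂,u₂,w₂)) = (t₁t₂, (t₁u₂ + t₂u₁)/2, σ(u₁,u₂)). Then for every v ∈ V and every point α = (t, u, w) with t ≠ 0 and t·w = σ(u,u), the vector A(v,α) lies in the tangent space T_α = {(t',u',w') : t·w' + t'·w − 2σ(u,u') = 0}. -/
import Mathlib

/-- For a symmetric bilinear `σ : U × U → W`, set `V = ℂ ⊕ U ⊕ W` and
`A((t₁,u₁,w₁),(t₂,u₂,w₂)) = (t₁t₂, (t₁u₂ + t₂u₁)/2, σ(u₁,u₂))`.  For any `v ∈ V` and any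
`α = (t,u,w)` with `t ≠ 0` and `t·w = σ(u,u)`, the vector `A(v,α)` lies in the tangent space
`{(t',u',w') : t·w' + t'·w − 2σ(u,u') = 0}`. -/
theorem stmt_3 {U W : Type*} [AddCommGroup U] [Module ℂ U] [AddCommGroup W] [Module ℂ W]
    (σ : U →ₗ[ℂ] U →ₗ[ℂ] W) (hsymm : ∀ x y : U, σ x y = σ y x)
    (A : ℂ × U × W → ℂ × U × W → ℂ × U × W)
    (hA : ∀ p q : ℂ × U × W,
      A p q = (p.1 * q.1, ((1 : ℂ) / 2) • (p.1 • q.2.1 + q.1 • p.2.1), σ p.2.1 q.2.1))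
    (t₀ : ℂ) (u₀ : U) (w₀ : W) (t : ℂ) (u : U) (w : W)
    (ht : t ≠ 0) (hα : t • w = σ u u) :
    t • (A (t₀, u₀, w₀) (t, u, w)).2.2 + (A (t₀, u₀, w₀) (t, u, w)).1 • w
      - (2 : ℂ) • σ u (A (t₀, u₀, w₀) (t, u, w)).2.1 = 0 := by
  rw [hA]
  have h1 : σ u ((1 / 2 : ℂ) • (t₀ • u + t • u₀)) =
      ((1 / 2 : ℂ) * t₀) • σ u u + ((1 / 2 : ℂ) * t) • σ u u₀ := by
    rw [map_smul, map_add, map_smul, map_smul, smul_add, smul_smul, smul_smul]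
  simp only [h1, hsymm u u₀, ← hα]
  module
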